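/- Let X be a complex Banach space and L(X) the Banach algebra of bounded linear operators on X. Let M = [[A, B], [C, D]] ∈ M₂(L(X)) and suppose A and D have Hirano inverses A^H and D^H. If B D^H = 0, A^π B C = 0, A^H B C = 0 and (D·D^π − C A^H B)·C = 0, where A^π = I − A·A^H and D^π = I − D·D^H, then M has a Hirano inverse in M₂(L(X)). -/

import Mathlib

/-- `a` has a Hirano inverse: there exists `z` with `az = za`, `z = zaz`,
and `a^2 - az` nilpotent. -/
def HasHiranoInverse {R : Type*} [Ring R] (a : R) : Prop :=
  ∃ z : R, a * z = z * a ∧ z = z * a * z ∧ IsNilpotent (a ^ 2 - a * z)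

/-- `a` has a strongly Drazin inverse: there exists `z` with `az = za`, `z = zaz`,
and `a - az` nilpotent. -/
def HasStronglyDrazinInverse {R : Type*} [Ring R] (a : R) : Prop :=
  ∃ z : R, a * z = z * a ∧ z = z * a * z ∧ IsNilpotent (a - a * z)

variable {X : Type*} [NormedAddCommGroup X] [NormedSpace ℂ X] [CompleteSpace X]

/-!
An element `a` of a ring has a Hirano inverse iff `a - a³` is nilpotent: then `a² - a⁴` is
nilpotent, so an idempotent `e` commuting with `a` lifts from `a²`, and `a * e * (1 + a² - e)⁻¹`
is the Hirano inverse. The hypotheses give `B * Dᵐ * C = 0` for all `m`, and under this condition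
`M - M³ = T + U` with `T = !![A - A³, 0; c, D - D³]` lower triangular with nilpotent diagonal and
`U = !![0, q; 0, s]`, where `q` and `s` annihilate every `Dᵐ * C` while `c` and `s` lie in the right
ideal these generate. Hence `U * Tʲ * U = 0` for all `j`, which makes `T + U` nilpotent.
-/

open Finset

section Ring

variable {R : Type*} [Ring R]

open scoped IsMulCommutative in
theorem exists_isIdempotentElem_isNilpotent_sub {x : R} (h : IsNilpotent (x - x ^ 2)) :
    ∃ e : R, IsIdempotentElem e ∧ IsNilpotent (x - e) ∧ ∀ y, Commute x y → Commute e y := by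
  set S := Algebra.adjoin ℤ {x}
  set x' : S := ⟨x, Algebra.self_mem_adjoin_singleton ℤ x⟩
  set P : Polynomial ℤ := Polynomial.X - Polynomial.X ^ 2
  have hP : IsNilpotent (Polynomial.aeval x' P) := by
    rw [← IsNilpotent.map_iff (f := S.val) Subtype.val_injective]
    simpa [P] using h
  -- `P'(x) = 1 - 2x` is a unit because `(1 - 2x) ^ 2 = 1 - 4 (x - x ^ 2)`
  have hP' : IsUnit (Polynomial.aeval x' (Polynomial.derivative P)) := by
    refine (isUnit_pow_iff two_ne_zero).mp ?_
    convert (Commute.all 4 _).isNilpotent_mul_left hP |>.isUnit_one_sub using 1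
    simp only [P, Polynomial.derivative_X, Polynomial.derivative_X_pow, map_sub, map_one, map_mul,
      map_natCast, map_pow, Polynomial.aeval_X]
    ring
  obtain ⟨e, he, hroot⟩ := (Polynomial.existsUnique_nilpotent_sub_and_aeval_eq_zero hP hP').exists
  refine ⟨e, ?_, by simpa using he.map S.val, fun y hy => ?_⟩
  · have : (e : R) - e ^ 2 = 0 := by simpa [P] using congrArg S.val hroot
    rw [IsIdempotentElem, ← sq, ← sub_eq_zero, ← neg_sub, this, neg_zero]
  · exact (Algebra.commute_of_mem_adjoin_of_forall_mem_commute e.2 (by simpa using hy.symm)).symm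

theorem isNilpotent_sub_pow_three_of_hasHiranoInverse {a : R} (h : HasHiranoInverse a) :
    IsNilpotent (a - a ^ 3) := by
  obtain ⟨z, hcomm, hz, hnil⟩ := h
  have hap : Commute a (a * z) := by rw [Commute, SemiconjBy, mul_assoc a z a, ← hcomm]
  have hp : IsIdempotentElem (a * z) := by
    rw [IsIdempotentElem, show a * z * (a * z) = a * (z * a * z) by simp only [mul_assoc], ← hz]
  set p := a * z
  have ha1p : Commute a (1 - p) := (Commute.one_right a).sub_right hap
  have han : Commute a (a ^ 2 - p) := ((Commute.refl a).pow_right 2).sub_right hap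
  have hnp : Commute (a ^ 2 - p) (1 - p) :=
    (Commute.one_right _).sub_right ((hap.symm.pow_right 2).sub_right (.refl p)).symm
  have h1 : IsNilpotent (a * (1 - p)) := by
    refine IsNilpotent.of_pow (m := 2) ?_
    rw [ha1p.mul_pow, sq (1 - p), hp.one_sub.eq, show a ^ 2 * (1 - p) = (a ^ 2 - p) * (1 - p) by
      rw [sub_mul (a ^ 2) p, hp.mul_one_sub_self, sub_zero]]
    exact hnp.isNilpotent_mul_right hnil
  have h2 : IsNilpotent (a * (a ^ 2 - p)) := han.isNilpotent_mul_left hnil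
  have h12 : Commute (a * (1 - p)) (a * (a ^ 2 - p)) :=
    ((Commute.refl a).mul_right han).mul_left (ha1p.symm.mul_right hnp.symm)
  rw [show a - a ^ 3 = a * (1 - p) - a * (a ^ 2 - p) by noncomm_ring]
  exact h12.isNilpotent_sub h1 h2

theorem hasHiranoInverse_of_isNilpotent_sub_pow_three {a : R} (h : IsNilpotent (a - a ^ 3)) :
    HasHiranoInverse a := by
  have hx : IsNilpotent (a ^ 2 - (a ^ 2) ^ 2) := by
    rw [show a ^ 2 - (a ^ 2) ^ 2 = a * (a - a ^ 3) by noncomm_ring]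
    exact ((Commute.refl a).sub_right ((Commute.refl a).pow_right 3)).isNilpotent_mul_left h
  obtain ⟨e, he, hxe, hcomm⟩ := exists_isIdempotentElem_isNilpotent_sub hx
  have hae : Commute a e := (hcomm a ((Commute.refl a).pow_left 2)).symm
  obtain ⟨u, hu⟩ := hxe.isUnit_one_add
  -- `u * e = a ^ 2 * e`, so `a * e * u⁻¹` inverts `a` on the range of `e`
  have hue : (u : R) * e = a ^ 2 * e := by
    rw [hu, add_mul, sub_mul, he.eq, one_mul, add_sub_cancel]
  have hau : Commute a ↑u⁻¹ := Commute.units_inv_right <| by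
    rw [hu]; exact (Commute.one_right a).add_right (((Commute.refl a).pow_right 2).sub_right hae)
  have heu : Commute e ↑u⁻¹ := Commute.units_inv_right <| by
    rw [hu]; exact (Commute.one_right e).add_right ((hae.pow_left 2).symm.sub_right (.refl e))
  set z := a * e * ↑u⁻¹
  have haz : a * z = e := by
    rw [← mul_assoc, ← mul_assoc, ← sq, ← hue, mul_assoc, heu.eq, ← mul_assoc, Units.mul_inv,
      one_mul]
  have hze : z * e = z := by rw [mul_assoc, ← heu.eq, ← mul_assoc, mul_assoc a, he.eq]
  refine ⟨z, (((Commute.refl a).mul_right hae).mul_right hau).eq, ?_, by rwa [haz]⟩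
  rw [mul_assoc, haz, hze]

theorem hasHiranoInverse_iff_isNilpotent_sub_pow_three {a : R} :
    HasHiranoInverse a ↔ IsNilpotent (a - a ^ 3) :=
  ⟨isNilpotent_sub_pow_three_of_hasHiranoInverse, hasHiranoInverse_of_isNilpotent_sub_pow_three⟩

theorem add_pow_succ_eq_of_mul_pow_mul_eq_zero {t u : R} (h : ∀ j, u * t ^ j * u = 0) (k : ℕ) :
    (t + u) ^ (k + 1) = t ^ (k + 1) + ∑ p ∈ antidiagonal k, t ^ p.1 * u * t ^ p.2 := by
  induction k with
  | zero => simp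
  | succ k ih =>
    have hu : ∑ p ∈ antidiagonal k, t ^ p.1 * u * t ^ p.2 * u = 0 :=
      sum_eq_zero fun p _ => by rw [mul_assoc, mul_assoc, ← mul_assoc u, h, mul_zero]
    rw [pow_succ, ih, Nat.sum_antidiagonal_succ', add_mul, sum_mul]
    simp only [mul_add, sum_add_distrib, hu, add_zero]
    simp only [pow_succ, pow_zero, mul_one, mul_assoc]
    abel

theorem isNilpotent_add_of_mul_pow_mul_eq_zero {t u : R} (ht : IsNilpotent t)
    (h : ∀ j, u * t ^ j * u = 0) : IsNilpotent (t + u) := by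
  obtain ⟨n, hn⟩ := ht
  have hpow (m : ℕ) (hm : n ≤ m) : t ^ m = 0 := pow_eq_zero_of_le hm hn
  refine ⟨2 * n + 1, ?_⟩
  rw [add_pow_succ_eq_of_mul_pow_mul_eq_zero h, hpow _ (by omega), zero_add]
  refine sum_eq_zero fun p hp => ?_
  rcases le_total n p.1 with h1 | h2
  · rw [hpow _ h1, zero_mul, zero_mul]
  · rw [hpow p.2 (by rw [HasAntidiagonal.mem_antidiagonal] at hp; omega), mul_zero]

@[simp]
theorem Matrix.of_zero_fin_two : (!![0, 0; 0, 0] : Matrix (Fin 2) (Fin 2) R) = 0 :=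
  (Matrix.eta_fin_two 0).symm

theorem Matrix.fin_two_lower_pow (a c d : R) (n : ℕ) :
    !![a, 0; c, d] ^ n = !![a ^ n, 0; ∑ i ∈ range n, d ^ i * c * a ^ (n - 1 - i), d ^ n] := by
  induction n with
  | zero => simp [Matrix.one_fin_two]
  | succ n ih =>
    rw [pow_succ', ih, Matrix.mul_fin_two, sum_range_succ', mul_sum]
    simp [pow_succ', mul_assoc, Nat.sub_sub, add_comm 1, add_comm (c * _), mul_sum]

theorem Matrix.fin_two_lower_isNilpotent {a c d : R} (ha : IsNilpotent a) (hd : IsNilpotent d) :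
    IsNilpotent !![a, 0; c, d] := by
  obtain ⟨m, hm⟩ := ha
  obtain ⟨n, hn⟩ := hd
  refine ⟨(m + n) * 2, ?_⟩
  rw [pow_mul, Matrix.fin_two_lower_pow, pow_add, hm, pow_add, hn, zero_mul, mul_zero, sq,
    Matrix.mul_fin_two]
  simp

def KillsOrbit (d c x : R) : Prop := ∀ m : ℕ, x * (d ^ m * c) = 0

namespace KillsOrbit

variable {d c x y : R}

theorem mul_left (h : KillsOrbit d c x) (r : R) : KillsOrbit d c (r * x) :=
  fun m => by rw [mul_assoc, h m, mul_zero]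

theorem add (hx : KillsOrbit d c x) (hy : KillsOrbit d c y) : KillsOrbit d c (x + y) :=
  fun m => by rw [add_mul, hx m, hy m, add_zero]

theorem neg (h : KillsOrbit d c x) : KillsOrbit d c (-x) :=
  fun m => by rw [neg_mul, h m, neg_zero]

theorem sub (hx : KillsOrbit d c x) (hy : KillsOrbit d c y) : KillsOrbit d c (x - y) :=
  fun m => by rw [sub_mul, hx m, hy m, sub_zero]

theorem mul_self_right (h : KillsOrbit d c x) : KillsOrbit d c (x * d) :=
  fun m => by rw [mul_assoc, ← mul_assoc d, ← pow_succ', h]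

theorem mul_right_of_mem_adjoin {r : R} (hr : r ∈ Algebra.adjoin ℤ {d}) (h : KillsOrbit d c x) :
    KillsOrbit d c (x * r) := by
  induction hr using Algebra.adjoin_induction generalizing x with
  | mem r hr => rw [Set.mem_singleton_iff.mp hr]; exact h.mul_self_right
  | algebraMap n => rw [← Algebra.commutes n x]; exact h.mul_left _
  | add r₁ r₂ _ _ h₁ h₂ => rw [mul_add]; exact (h₁ h).add (h₂ h)
  | mul r₁ r₂ _ _ h₁ h₂ => rw [← mul_assoc]; exact h₂ (h₁ h)

theorem of_mul_eq_zero {A B C D AH DH : R} (hD : D * DH = DH * D) (h1 : B * DH = 0)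
    (h2 : (1 - A * AH) * B * C = 0) (h3 : AH * B * C = 0)
    (h4 : (D * (1 - D * DH) - C * AH * B) * C = 0) : KillsOrbit D C B := by
  have hBC : B * C = 0 := by
    rwa [sub_mul, sub_mul, one_mul, mul_assoc A, mul_assoc A, h3, mul_zero, sub_zero] at h2
  have hBp : B * (D * DH) = 0 := by rw [hD, ← mul_assoc, h1, zero_mul]
  have hDp : Commute D (D * DH) := by rw [Commute, SemiconjBy, mul_assoc D DH D, ← hD]
  have hDC : D * C = D * DH * (D * C) := by
    rwa [sub_mul, mul_assoc C, mul_assoc C, h3, mul_zero, sub_zero, mul_sub, mul_one, sub_mul,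
      sub_eq_zero, hDp.eq, mul_assoc] at h4
  rintro (_ | m)
  · simpa using hBC
  · rw [pow_succ, mul_assoc (D ^ m), hDC, ← mul_assoc (D ^ m), (hDp.pow_left m).eq, mul_assoc,
      ← mul_assoc B, hBp, zero_mul]

end KillsOrbit

theorem isNilpotent_fin_two_sub_pow_three {A B C D : R} (hA : IsNilpotent (A - A ^ 3))
    (hD : IsNilpotent (D - D ^ 3)) (hB : KillsOrbit D C B) :
    IsNilpotent (!![A, B; C, D] - !![A, B; C, D] ^ 3) := by
  set q := B - A * (A * B) - A * (B * D) - B * D * D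
  set s := -(C * A * B + C * (B * D) + D * C * B)
  set c := C - C * (A * A) - D * (C * A) - D * (D * C)
  have hq : KillsOrbit D C q :=
    ((hB.sub ((hB.mul_left A).mul_left A)).sub (hB.mul_self_right.mul_left A)).sub
      hB.mul_self_right.mul_self_right
  have hs : KillsOrbit D C s :=
    (((hB.mul_left _).add (hB.mul_self_right.mul_left C)).add (hB.mul_left _)).neg
  have hc (x : R) (hx : KillsOrbit D C x) : x * c = 0 := by
    have h0 := hx 0; have h1 := hx 1; have h2 := hx 2
    simp only [c, mul_sub, ← mul_assoc, pow_zero, mul_one, pow_one, sq] at *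
    simp [h0, h1, h2]
  have hs' (x : R) (hx : KillsOrbit D C x) : x * s = 0 := by
    have h0 := hx 0; have h1 := hx 1
    simp only [s, mul_add, mul_neg, ← mul_assoc, pow_zero, mul_one, pow_one] at *
    simp [h0, h1]
  have hM : !![A, B; C, D] - !![A, B; C, D] ^ 3
      = !![A - A ^ 3, 0; c, D - D ^ 3] + !![0, q; 0, s] := by
    have hBC : B * C = 0 := by simpa using hB 0
    have hBDC : B * (D * C) = 0 := by simpa using hB 1
    have hBCv (v : R) : B * (C * v) = 0 := by rw [← mul_assoc, hBC, zero_mul]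
    rw [pow_three, Matrix.mul_fin_two, Matrix.mul_fin_two]
    ext i j
    fin_cases i <;> fin_cases j <;>
      simp [q, s, c, pow_three, mul_add, mul_assoc, hBC, hBDC, hBCv] <;> abel
  rw [hM]
  refine isNilpotent_add_of_mul_pow_mul_eq_zero (Matrix.fin_two_lower_isNilpotent hA hD) fun j => ?_
  have hδ : D - D ^ 3 ∈ Algebra.adjoin ℤ {D} :=
    have hD' := Algebra.self_mem_adjoin_singleton ℤ D
    sub_mem hD' (pow_mem hD' 3)
  have hkill (x : R) (hx : KillsOrbit D C x) :
      x * ∑ i ∈ range j, (D - D ^ 3) ^ i * c * (A - A ^ 3) ^ (j - 1 - i) = 0 ∧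
        x * (D - D ^ 3) ^ j * s = 0 := by
    have hxδ (i : ℕ) : KillsOrbit D C (x * (D - D ^ 3) ^ i) :=
      hx.mul_right_of_mem_adjoin (pow_mem hδ i)
    refine ⟨?_, hs' _ (hxδ j)⟩
    rw [mul_sum]
    exact sum_eq_zero fun i _ => by rw [← mul_assoc, ← mul_assoc, hc _ (hxδ i), zero_mul]
  obtain ⟨hqy, hqs⟩ := hkill q hq
  obtain ⟨hsy, hss⟩ := hkill s hs
  rw [Matrix.fin_two_lower_pow, Matrix.mul_fin_two, Matrix.mul_fin_two]
  simp [hqy, hsy, hqs, hss]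

end Ring

theorem hirano_matrix_thm34 (A B C D AH DH : X →L[ℂ] X)
    (hAH : A * AH = AH * A ∧ AH = AH * A * AH ∧ IsNilpotent (A ^ 2 - A * AH))
    (hDH : D * DH = DH * D ∧ DH = DH * D * DH ∧ IsNilpotent (D ^ 2 - D * DH))
    (h1 : B * DH = 0)
    (h2 : (1 - A * AH) * B * C = 0)
    (h3 : AH * B * C = 0)
    (h4 : (D * (1 - D * DH) - C * AH * B) * C = 0) :
    HasHiranoInverse (!![A, B; C, D] : Matrix (Fin 2) (Fin 2) (X →L[ℂ] X)) := by
  have hA := hasHiranoInverse_iff_isNilpotent_sub_pow_three.1 ⟨AH, hAH⟩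
  have hD := hasHiranoInverse_iff_isNilpotent_sub_pow_three.1 ⟨DH, hDH⟩
  have hB := KillsOrbit.of_mul_eq_zero hDH.1 h1 h2 h3 h4
  exact hasHiranoInverse_iff_isNilpotent_sub_pow_three.2
    (isNilpotent_fin_two_sub_pow_three hA hD hB)
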